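/- The critical path length of the tiled BinaryTree algorithm (with TT kernels) satisfies CP_BT(p,q) = 6 q log₂ p + o(q log₂ p): for every sequence (p_n, q_n) of integer pairs with q_n ≤ p_n, q_n → ∞ and p_n → ∞, the ratio CP_BT(p_n, q_n) / (6 q_n log₂ p_n) tends to 1 as n → ∞. -/

import Mathlib

/-!
Upper bound: a column has at most `⌊log₂ p⌋ + 1` stages, and every dependence between two
eliminations of the same column goes from a stage to a strictly later one. So column `k` can
be scheduled inside the time window `((k - 1) W, k W]`, `W = 16 + 6 ⌊log₂ p⌋`, and
`CP ≤ q (16 + 6 log₂ p)`.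

Lower bound: in column `k`, the updates of column `k + 1` along the pivot chain
`k + 2 ^ m - 1 → k + 2 ^ m - 2 → ⋯ → k + 2 ^ (m - 1) → k`, followed by the eliminations of the
rows `k + 2 ^ s` by row `k`, form a chain of `⌊log₂ (p - k)⌋ + 1` tasks of weight 6. Its last
row `k + 2 ^ ⌊log₂ (p - k)⌋` is the top of the pivot chain of column `k + 1`, so the chains of
the successive columns link up and `CP ≥ 6 k (⌊log₂ (p - k)⌋ + 1)` for every `k < q`. Taking
`k ≈ (1 - 1 / log₂ p) q` gives `CP ≥ 6 q log₂ p (1 - o(1))`.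
-/

namespace TiledQR

/-- An elimination `elim(i, piv, k)`: tile `(i, k)` is zeroed out by an orthogonal
transformation combining row `i` with pivot row `piv`. -/
structure Elim where
  i : ℕ
  piv : ℕ
  k : ℕ
deriving DecidableEq

/-- `Before L e f` : the elimination `e` occurs strictly before `f` in the list `L`. -/
def Before (L : List Elim) (e f : Elim) : Prop :=
  ∃ a b : Fin L.length, (a : ℕ) < b ∧ L.get a = e ∧ L.get b = f

/-- `L` is a valid elimination list for a `p × q` tiled matrix: it contains exactly one
elimination for every sub-diagonal tile `(i, k)` (`1 ≤ k ≤ min p q`, `k < i ≤ p`);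
every elimination `elim(i, piv, k)` comes after all eliminations `elim(i, *, k')` and
`elim(piv, *, k')` with `k' < k`, and before the elimination `elim(piv, *, k)` of its
pivot row. -/
def ValidElimList (p q : ℕ) (L : List Elim) : Prop :=
  L.Nodup ∧
  (∀ e ∈ L, 1 ≤ e.k ∧ e.k ≤ min p q ∧ e.k < e.i ∧ e.i ≤ p ∧
      1 ≤ e.piv ∧ e.piv ≤ p ∧ e.piv ≠ e.i) ∧
  (∀ i k, 1 ≤ k → k ≤ min p q → k < i → i ≤ p → ∃! piv, Elim.mk i piv k ∈ L) ∧
  (∀ a b : Fin L.length, (L.get b).k < (L.get a).k →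
      ((L.get b).i = (L.get a).i ∨ (L.get b).i = (L.get a).piv) → (b : ℕ) < a) ∧
  (∀ a b : Fin L.length, (L.get b).k = (L.get a).k →
      (L.get b).i = (L.get a).piv → (a : ℕ) < b)

/-- The tasks of the tiled QR factorization with TT (triangle-on-top-of-triangle)
kernels. -/
inductive Task where
  | GEQRT (r k : ℕ)
  | UNMQR (r k j : ℕ)
  | TTQRT (i piv k : ℕ)
  | TTMQR (i piv k j : ℕ)
deriving DecidableEq

/-- Weights of the TT kernels, the unit being `n_b ^ 3 / 3` flops. -/
def weight : Task → ℕ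
  | .GEQRT _ _ => 4
  | .UNMQR _ _ _ => 6
  | .TTQRT _ _ _ => 2
  | .TTMQR _ _ _ _ => 6

/-- The tasks associated with a `p × q` tiled matrix and an elimination list `L`:
a factorization `GEQRT(r, k)` and updates `UNMQR(r, k, j)` (`k < j ≤ q`) for every tile
`(r, k)` with `k ≤ r ≤ p`, and, for every elimination `elim(i, piv, k)` of `L`, a task
`TTQRT(i, piv, k)` and updates `TTMQR(i, piv, k, j)` for `k < j ≤ q`. -/
def InTasks (p q : ℕ) (L : List Elim) : Task → Prop
  | .GEQRT r k => 1 ≤ k ∧ k ≤ min p q ∧ k ≤ r ∧ r ≤ p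
  | .UNMQR r k j => 1 ≤ k ∧ k ≤ min p q ∧ k ≤ r ∧ r ≤ p ∧ k < j ∧ j ≤ q
  | .TTQRT i piv k => Elim.mk i piv k ∈ L
  | .TTMQR i piv k j => Elim.mk i piv k ∈ L ∧ k < j ∧ j ≤ q

/-- The precedence (dependence) relation between the TT tasks.  Besides the flow
dependencies of the kernels, two tasks reading and writing a common tile
(a pivot tile reused by several eliminations of a column, or a pivot tile that is
subsequently zeroed out) are serialized in the order of the elimination list. -/
inductive Prec (L : List Elim) : Task → Task → Prop
  | geqrt_unmqr (r k j : ℕ) :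
      Prec L (.GEQRT r k) (.UNMQR r k j)
  | geqrt_ttqrt_row (i piv k : ℕ) :
      Prec L (.GEQRT i k) (.TTQRT i piv k)
  | geqrt_ttqrt_piv (i piv k : ℕ) :
      Prec L (.GEQRT piv k) (.TTQRT i piv k)
  | ttqrt_ttmqr (i piv k j : ℕ) :
      Prec L (.TTQRT i piv k) (.TTMQR i piv k j)
  | unmqr_ttmqr_row (i piv k j : ℕ) :
      Prec L (.UNMQR i k j) (.TTMQR i piv k j)
  | unmqr_ttmqr_piv (i piv k j : ℕ) :
      Prec L (.UNMQR piv k j) (.TTMQR i piv k j)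
  | ttmqr_geqrt (a b i k : ℕ) : 2 ≤ k → (a = i ∨ b = i) →
      Prec L (.TTMQR a b (k - 1) k) (.GEQRT i k)
  | ttqrt_serial (i i' piv k : ℕ) :
      Before L (Elim.mk i piv k) (Elim.mk i' piv k) →
      Prec L (.TTQRT i piv k) (.TTQRT i' piv k)
  | ttmqr_serial (i i' piv k j : ℕ) :
      Before L (Elim.mk i piv k) (Elim.mk i' piv k) →
      Prec L (.TTMQR i piv k j) (.TTMQR i' piv k j)
  | ttqrt_pivot_use (a i piv k : ℕ) :
      Prec L (.TTQRT a i k) (.TTQRT i piv k)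
  | ttmqr_pivot_use (a i piv k j : ℕ) :
      Prec L (.TTMQR a i k j) (.TTMQR i piv k j)

/-- A path in the weighted task DAG. -/
def IsPath (p q : ℕ) (L : List Elim) (path : List Task) : Prop :=
  (∀ t ∈ path, InTasks p q L t) ∧ path.Chain' (Prec L)

/-- The critical path length of the tiled algorithm given by the elimination list `L`:
the maximum total weight of a path in the weighted task DAG (equivalently, the makespan
of the earliest-start schedule with unboundedly many processors). -/
noncomputable def cpLength (p q : ℕ) (L : List Elim) : ℕ :=
  sSup { w : ℕ | ∃ path : List Task, IsPath p q L path ∧ w = (path.map weight).sum }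
/-- The elimination list of the tiled BinaryTree algorithm: in each column `k`, at
stage `s = 1, 2, …`, every row `i` such that `i - k` is an odd multiple of `2 ^ (s - 1)`
is zeroed out using pivot row `i - 2 ^ (s - 1)`; eliminations are listed column by
column and, within a column, by increasing stage. -/
def btList (p q : ℕ) : List Elim :=
  (List.range' 1 (min p q)).flatMap fun k =>
    (List.range' 1 p).flatMap fun s =>
      (List.range' (k + 1) (p - k)).filterMap fun i =>
        if (i - k) % 2 ^ s = 2 ^ (s - 1) then some (Elim.mk i (i - 2 ^ (s - 1)) k)
        else none

section CriticalPath

variable {p q : ℕ} {L : List Elim}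

lemma before_iff_of_pairwise {α : Type*} [Preorder α] {key : Elim → α}
    (hL : L.Pairwise fun e f => key e < key f) {e f : Elim} (he : e ∈ L) (hf : f ∈ L) :
    Before L e f ↔ key e < key f := by
  constructor
  · rintro ⟨a, b, hab, rfl, rfl⟩
    exact List.pairwise_iff_get.mp hL a b hab
  · intro hlt
    obtain ⟨a, rfl⟩ := List.get_of_mem he
    obtain ⟨b, rfl⟩ := List.get_of_mem hf
    rcases lt_trichotomy (a : ℕ) b with hab | hab | hab
    · exact ⟨a, b, hab, rfl, rfl⟩
    · rw [Fin.ext hab] at hlt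
      exact absurd hlt (lt_irrefl _)
    · exact absurd (List.pairwise_iff_get.mp hL b a hab) (lt_asymm hlt)

lemma Before.mem {e f : Elim} (h : Before L e f) : e ∈ L ∧ f ∈ L := by
  obtain ⟨a, b, -, rfl, rfl⟩ := h
  exact ⟨List.get_mem L a, List.get_mem L b⟩

/-- `f` assigns finishing times of a schedule on unboundedly many processors: every task
starts at a nonnegative time, after all its predecessors have finished. -/
def IsSchedule (p q : ℕ) (L : List Elim) (f : Task → ℕ) : Prop :=
  (∀ t, InTasks p q L t → weight t ≤ f t) ∧
    ∀ t t', InTasks p q L t → InTasks p q L t' → Prec L t t' → f t + weight t' ≤ f t'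

lemma IsSchedule.pathWeight_le_getLast {f : Task → ℕ} (hf : IsSchedule p q L f)
    {path : List Task} (hpath : IsPath p q L path) :
    ∀ t ∈ path.getLast?, (path.map weight).sum ≤ f t := by
  induction path using List.reverseRecOn with
  | nil => simp
  | append_singleton path t ih =>
    obtain ⟨hmem, hchain⟩ := hpath
    rw [List.Chain', List.isChain_append] at hchain
    intro t' ht'
    obtain rfl : t = t' := by simpa using ht'
    have ht : InTasks p q L t := hmem t (by simp)
    rcases hlast : path.getLast? with _ | s
    · simp_all [hf.1 t ht]
    · have hs : s ∈ path := List.mem_of_getLast? hlast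
      have hst : Prec L s t := hchain.2.2 s hlast t rfl
      have := ih ⟨fun u hu => hmem u (by simp [hu]), hchain.1⟩ s hlast
      have := hf.2 s t (hmem s (by simp [hs])) ht hst
      simp only [List.map_append, List.sum_append, List.map_singleton, List.sum_singleton]
      omega

lemma IsSchedule.pathWeight_le {f : Task → ℕ} (hf : IsSchedule p q L f) {B : ℕ}
    (hB : ∀ t, InTasks p q L t → f t ≤ B) {path : List Task} (hpath : IsPath p q L path) :
    (path.map weight).sum ≤ B := by
  rcases hlast : path.getLast? with _ | t
  · simp_all
  · exact (hf.pathWeight_le_getLast hpath t hlast).trans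
      (hB t (hpath.1 t (List.mem_of_getLast? hlast)))

lemma cpLength_le_of_isSchedule {f : Task → ℕ} (hf : IsSchedule p q L f) {B : ℕ}
    (hB : ∀ t, InTasks p q L t → f t ≤ B) : cpLength p q L ≤ B :=
  csSup_le ⟨0, [], ⟨by simp, List.isChain_nil⟩, rfl⟩ fun _ ⟨_, hpath, hw⟩ =>
    hw ▸ hf.pathWeight_le hB hpath

def HasPathTo (p q : ℕ) (L : List Elim) (t : Task) (w : ℕ) : Prop :=
  ∃ path, IsPath p q L (path ++ [t]) ∧ w ≤ ((path ++ [t]).map weight).sum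

lemma hasPathTo_weight {t : Task} (ht : InTasks p q L t) : HasPathTo p q L t (weight t) :=
  ⟨[], ⟨by simpa using ht, List.isChain_singleton t⟩, by simp⟩

lemma HasPathTo.mono {t : Task} {w w' : ℕ} (h : HasPathTo p q L t w) (hw : w' ≤ w) :
    HasPathTo p q L t w' :=
  let ⟨path, hpath, hle⟩ := h
  ⟨path, hpath, hw.trans hle⟩

lemma HasPathTo.step {t t' : Task} {w : ℕ} (h : HasPathTo p q L t w) (ht' : InTasks p q L t')
    (hprec : Prec L t t') : HasPathTo p q L t' (w + weight t') := by
  obtain ⟨path, ⟨hmem, hchain⟩, hw⟩ := h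
  refine ⟨path ++ [t], ⟨fun u hu => ?_, ?_⟩, ?_⟩
  · rcases List.mem_append.mp hu with hu | hu
    · exact hmem u hu
    · exact (List.mem_singleton.mp hu) ▸ ht'
  · rw [List.Chain', List.isChain_append]
    exact ⟨hchain, List.isChain_singleton t', by simp [hprec]⟩
  · simp only [List.map_append, List.sum_append, List.map_singleton, List.sum_singleton] at hw ⊢
    omega

lemma HasPathTo.le_cpLength {t : Task} {w : ℕ} (h : HasPathTo p q L t w) {f : Task → ℕ}
    (hf : IsSchedule p q L f) {B : ℕ} (hB : ∀ t, InTasks p q L t → f t ≤ B) :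
    w ≤ cpLength p q L := by
  obtain ⟨path, hpath, hw⟩ := h
  exact hw.trans <| le_csSup ⟨B, fun _ ⟨_, hp, hv⟩ => hv ▸ hf.pathWeight_le hB hp⟩ ⟨_, hpath, rfl⟩

end CriticalPath

section BinaryTree

variable {p q : ℕ}

lemma padicValNat_two_pow_mul_odd (v : ℕ) {m : ℕ} (hm : Odd m) :
    padicValNat 2 (2 ^ v * m) = v := by
  rw [padicValNat.mul (p := 2) (by positivity) (by rintro rfl; simp at hm),
    padicValNat.prime_pow, padicValNat.eq_zero_of_not_dvd hm.not_two_dvd_nat, add_zero]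

lemma mod_two_pow_succ_eq_iff {x : ℕ} (hx : x ≠ 0) (v : ℕ) :
    x % 2 ^ (v + 1) = 2 ^ v ↔ padicValNat 2 x = v := by
  have hmod : x % 2 ^ (v + 1) = x % 2 ^ v + 2 ^ v * (x / 2 ^ v % 2) := Nat.mod_pow_succ
  have hlt : x % 2 ^ v < 2 ^ v := Nat.mod_lt x (by positivity)
  have hdecomp : x = 2 ^ v * (x / 2 ^ v) + x % 2 ^ v := (Nat.div_add_mod x _).symm
  constructor
  · intro h
    have hbit : x / 2 ^ v % 2 = 1 := by
      rcases Nat.mod_two_eq_zero_or_one (x / 2 ^ v) with h0 | h1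
      · rw [h0] at hmod; omega
      · exact h1
    have hdvd : x % 2 ^ v = 0 := by rw [hbit] at hmod; omega
    rw [hdecomp, hdvd, add_zero]
    exact padicValNat_two_pow_mul_odd v (Nat.odd_iff.mpr hbit)
  · rintro rfl
    have hdvd : x % 2 ^ padicValNat 2 x = 0 := Nat.mod_eq_zero_of_dvd (pow_padicValNat_dvd (p := 2))
    have hbit : x / 2 ^ padicValNat 2 x % 2 = 1 := by
      by_contra h
      obtain ⟨c, hc⟩ : 2 ∣ x / 2 ^ padicValNat 2 x := Nat.dvd_of_mod_eq_zero (by omega)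
      refine pow_succ_padicValNat_not_dvd (p := 2) hx ⟨c, ?_⟩
      rw [pow_succ, mul_assoc, ← hc, Nat.mul_div_cancel' (pow_padicValNat_dvd (p := 2))]
    rw [hmod, hdvd, hbit]
    ring

def btStageList (p k s : ℕ) : List Elim :=
  (List.range' (k + 1) (p - k)).filterMap fun i =>
    if (i - k) % 2 ^ s = 2 ^ (s - 1) then some (Elim.mk i (i - 2 ^ (s - 1)) k) else none

lemma btList_eq_flatMap (p q : ℕ) :
    btList p q = (List.range' 1 (min p q)).flatMap fun k =>
      (List.range' 1 p).flatMap (btStageList p k) := rfl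

lemma mem_btStageList {k v : ℕ} {e : Elim} :
    e ∈ btStageList p k (v + 1) ↔
      e.k = k ∧ k < e.i ∧ e.i ≤ p ∧ padicValNat 2 (e.i - k) = v ∧ e.piv + 2 ^ v = e.i := by
  simp only [btStageList, List.mem_filterMap, List.mem_range'_1, Nat.add_sub_cancel]
  constructor
  · rintro ⟨i, hi, he⟩
    split_ifs at he with hmod
    cases he
    rw [mod_two_pow_succ_eq_iff (by omega)] at hmod
    have : 2 ^ v ≤ i - k := hmod ▸ Nat.ordProj_le 2 (by omega)
    dsimp only
    exact ⟨rfl, by omega, by omega, hmod, by omega⟩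
  · rcases e with ⟨i, piv, k'⟩
    rintro ⟨hk, hki, hip, hv, hpiv⟩
    dsimp only at hk hki hip hv hpiv
    subst hk
    refine ⟨i, by omega, ?_⟩
    rw [if_pos ((mod_two_pow_succ_eq_iff (by omega) v).mpr hv)]
    congr 2
    omega

/-- Row `i` of column `k` is zeroed at stage `v₂(i - k) + 1`, by the row `2 ^ v₂(i - k)` places
above it. -/
lemma mem_btList_iff {e : Elim} :
    e ∈ btList p q ↔ 1 ≤ e.k ∧ e.k ≤ min p q ∧ e.k < e.i ∧ e.i ≤ p ∧
      e.piv + 2 ^ padicValNat 2 (e.i - e.k) = e.i := by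
  simp only [btList_eq_flatMap, List.mem_flatMap, List.mem_range'_1]
  constructor
  · rintro ⟨k, hk, s, hs, he⟩
    obtain ⟨v, rfl⟩ : ∃ v, s = v + 1 := ⟨s - 1, by omega⟩
    obtain ⟨rfl, hki, hip, hv, hpiv⟩ := mem_btStageList.mp he
    exact ⟨by omega, by omega, hki, hip, hv ▸ hpiv⟩
  · rintro ⟨hk1, hkm, hki, hip, hpiv⟩
    have : 2 ^ padicValNat 2 (e.i - e.k) ≤ e.i - e.k := Nat.ordProj_le 2 (by omega)
    have : padicValNat 2 (e.i - e.k) < 2 ^ padicValNat 2 (e.i - e.k) := Nat.lt_two_pow_self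
    exact ⟨e.k, by omega, padicValNat 2 (e.i - e.k) + 1, by omega,
      mem_btStageList.mpr ⟨rfl, hki, hip, rfl, hpiv⟩⟩

def btKey (e : Elim) : ℕ ×ₗ ℕ ×ₗ ℕ := toLex (e.k, toLex (padicValNat 2 (e.i - e.k), e.i))

lemma btStageList_pairwise_btKey (p k v : ℕ) :
    (btStageList p k (v + 1)).Pairwise fun e f => btKey e < btKey f := by
  refine (List.pairwise_lt_range' 1).filterMap _ fun i i' hii' e he e' he' => ?_
  split_ifs at he he' with hi hi'
  cases he
  cases he'
  rw [Nat.add_sub_cancel] at hi hi'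
  have hne {j : ℕ} (hj : (j - k) % 2 ^ (v + 1) = 2 ^ v) : j - k ≠ 0 := fun h0 => by
    rw [h0, Nat.zero_mod] at hj
    exact (pow_pos two_pos v).ne hj
  rw [mod_two_pow_succ_eq_iff (hne hi)] at hi
  rw [mod_two_pow_succ_eq_iff (hne hi')] at hi'
  simpa [btKey, Prod.Lex.toLex_lt_toLex, hi, hi'] using hii'

lemma btList_pairwise_btKey (p q : ℕ) : (btList p q).Pairwise fun e f => btKey e < btKey f := by
  have stage_of_mem {k s e} (hs : s ∈ List.range' 1 p) (he : e ∈ btStageList p k s) :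
      e.k = k ∧ padicValNat 2 (e.i - e.k) + 1 = s := by
    obtain ⟨v, rfl⟩ : ∃ v, s = v + 1 := ⟨s - 1, by simp at hs; omega⟩
    obtain ⟨rfl, -, -, hv, -⟩ := mem_btStageList.mp he
    exact ⟨rfl, by rw [hv]⟩
  rw [btList_eq_flatMap, List.pairwise_flatMap]
  refine ⟨fun k _ => ?_, (List.pairwise_lt_range' 1).imp fun hkk' e he e' he' => ?_⟩
  · rw [List.pairwise_flatMap]
    refine ⟨fun s hs => ?_, (List.Pairwise.and_mem.mp (List.pairwise_lt_range' 1)).imp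
      fun ⟨hs, hs', hss'⟩ e he e' he' => ?_⟩
    · obtain ⟨v, rfl⟩ : ∃ v, s = v + 1 := ⟨s - 1, by simp at hs; omega⟩
      exact btStageList_pairwise_btKey p k v
    · obtain ⟨hk, hv⟩ := stage_of_mem hs he
      obtain ⟨hk', hv'⟩ := stage_of_mem hs' he'
      simp only [btKey, Prod.Lex.toLex_lt_toLex]
      omega
  · obtain ⟨s, hs, he⟩ := List.mem_flatMap.mp he
    obtain ⟨s', hs', he'⟩ := List.mem_flatMap.mp he'
    simp only [btKey, Prod.Lex.toLex_lt_toLex, (stage_of_mem hs he).1, (stage_of_mem hs' he').1]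
    exact Or.inl hkk'

end BinaryTree

section UpperBound

variable {p q : ℕ}

lemma padicValNat_le_log_of_mem_btList {e : Elim} (he : e ∈ btList p q) :
    padicValNat 2 (e.i - e.k) ≤ Nat.log 2 p := by
  obtain ⟨-, -, hki, hip, -⟩ := mem_btList_iff.mp he
  exact Nat.le_log_of_pow_le one_lt_two ((Nat.ordProj_le 2 (by omega)).trans (by omega))

lemma padicValNat_lt_of_pivot {a i piv k : ℕ} (ha : Elim.mk a i k ∈ btList p q)
    (hi : Elim.mk i piv k ∈ btList p q) : padicValNat 2 (a - k) < padicValNat 2 (i - k) := by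
  obtain ⟨-, -, hka, -, hpiv⟩ := mem_btList_iff.mp ha
  obtain ⟨-, -, hki, -, -⟩ := mem_btList_iff.mp hi
  dsimp only at hka hpiv hki
  set v := padicValNat 2 (a - k)
  have hmod : (a - k) % 2 ^ (v + 1) = 2 ^ v := (mod_two_pow_succ_eq_iff (by omega) v).mpr rfl
  have hdvd : 2 ^ (v + 1) ∣ i - k :=
    ⟨(a - k) / 2 ^ (v + 1), by have := Nat.div_add_mod (a - k) (2 ^ (v + 1)); omega⟩
  exact (padicValNat_dvd_iff_le (by omega)).mp hdvd

lemma padicValNat_lt_of_before {i i' piv k : ℕ}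
    (h : Before (btList p q) (Elim.mk i piv k) (Elim.mk i' piv k)) :
    padicValNat 2 (i - k) < padicValNat 2 (i' - k) := by
  obtain ⟨he, he'⟩ := h.mem
  have hlt := (before_iff_of_pairwise (btList_pairwise_btKey p q) he he').mp h
  obtain ⟨-, -, -, -, hpiv⟩ := mem_btList_iff.mp he
  obtain ⟨-, -, -, -, hpiv'⟩ := mem_btList_iff.mp he'
  simp only [btKey, Prod.Lex.toLex_lt_toLex] at hlt hpiv hpiv'
  rcases hlt with hlt | ⟨-, hlt | ⟨hv, hii'⟩⟩
  · omega
  · exact hlt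
  · rw [hv] at hpiv
    omega

/-- Column `k` is scheduled in the time window `((k - 1) W, k W]`, `W = 16 + 6 ⌊log₂ p⌋`,
which has room for its at most `⌊log₂ p⌋ + 1` stages. -/
def btFinish (p : ℕ) : Task → ℕ
  | .GEQRT _ k => (k - 1) * (16 + 6 * Nat.log 2 p) + 4
  | .UNMQR _ k _ => (k - 1) * (16 + 6 * Nat.log 2 p) + 10
  | .TTQRT i _ k => (k - 1) * (16 + 6 * Nat.log 2 p) + 6 + 2 * padicValNat 2 (i - k)
  | .TTMQR i _ k _ => (k - 1) * (16 + 6 * Nat.log 2 p) + 16 + 6 * padicValNat 2 (i - k)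

lemma isSchedule_btFinish : IsSchedule p q (btList p q) (btFinish p) := by
  refine ⟨fun t _ => by cases t <;> simp only [weight, btFinish] <;> omega, ?_⟩
  intro t t' ht ht' hprec
  cases hprec with
  | ttmqr_geqrt _ _ _ k hk _ =>
    have hv := padicValNat_le_log_of_mem_btList ht.1
    have hk' : (k - 1 - 1) * (16 + 6 * Nat.log 2 p) + (16 + 6 * Nat.log 2 p) =
        (k - 1) * (16 + 6 * Nat.log 2 p) := by
      rw [← Nat.succ_mul]
      congr 1
      omega
    simp only [btFinish, weight] at hv ⊢
    omega
  | ttqrt_serial _ _ _ _ hb | ttmqr_serial _ _ _ _ _ hb =>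
    have := padicValNat_lt_of_before hb
    simp only [btFinish, weight]
    omega
  | ttqrt_pivot_use =>
    have := padicValNat_lt_of_pivot ht ht'
    simp only [btFinish, weight]
    omega
  | ttmqr_pivot_use =>
    have := padicValNat_lt_of_pivot ht.1 ht'.1
    simp only [btFinish, weight]
    omega
  | _ => simp only [btFinish, weight]; omega

lemma btFinish_le {t : Task} (ht : InTasks p q (btList p q) t) :
    btFinish p t ≤ min p q * (16 + 6 * Nat.log 2 p) := by
  have hwindow {k : ℕ} (hk : 1 ≤ k) (hkm : k ≤ min p q) :
      (k - 1) * (16 + 6 * Nat.log 2 p) + (16 + 6 * Nat.log 2 p) ≤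
        min p q * (16 + 6 * Nat.log 2 p) := by
    rw [← Nat.succ_mul]
    exact Nat.mul_le_mul_right _ (by omega)
  cases t with
  | GEQRT r k => have := hwindow ht.1 ht.2.1; simp only [btFinish]; omega
  | UNMQR r k j => have := hwindow ht.1 ht.2.1; simp only [btFinish]; omega
  | TTQRT i piv k =>
    obtain ⟨hk, hkm, -⟩ := mem_btList_iff.mp ht
    have := hwindow hk hkm
    have := padicValNat_le_log_of_mem_btList ht
    simp only [btFinish] at *
    omega
  | TTMQR i piv k j =>
    obtain ⟨hk, hkm, -⟩ := mem_btList_iff.mp ht.1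
    have := hwindow hk hkm
    have := padicValNat_le_log_of_mem_btList ht.1
    simp only [btFinish] at *
    omega

lemma cpLength_btList_le (p q : ℕ) :
    cpLength p q (btList p q) ≤ min p q * (16 + 6 * Nat.log 2 p) :=
  cpLength_le_of_isSchedule isSchedule_btFinish fun _ => btFinish_le

end UpperBound

section LowerBound

variable {p q : ℕ}

lemma padicValNat_two_pow_sub_two_pow {m v : ℕ} (h : v < m) :
    padicValNat 2 (2 ^ m - 2 ^ v) = v := by
  obtain ⟨w, rfl⟩ : ∃ w, m = v + w + 1 := ⟨m - v - 1, by omega⟩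
  have hw : 1 ≤ 2 ^ w := Nat.one_le_two_pow
  rw [show 2 ^ (v + w + 1) - 2 ^ v = 2 ^ v * (2 * 2 ^ w - 1) by
    rw [Nat.mul_sub, pow_succ, pow_add]; ring_nf]
  exact padicValNat_two_pow_mul_odd v ⟨2 ^ w - 1, by omega⟩

def serialTask (k v : ℕ) : Task := .TTMQR (k + 2 ^ v) k k (k + 1)

/-- The update of column `k + 1` along the pivot chain
`k + 2 ^ m - 1 → k + 2 ^ m - 2 → k + 2 ^ m - 4 → ⋯ → k`. -/
def descentTask (k m v : ℕ) : Task :=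
  .TTMQR (k + 2 ^ m - 2 ^ v) (k + 2 ^ m - 2 ^ (v + 1)) k (k + 1)

lemma descentTask_self (k m : ℕ) : descentTask k (m + 1) m = serialTask k m := by
  simp only [descentTask, serialTask, pow_succ, Task.TTMQR.injEq, and_true]
  omega

lemma inTasks_serialTask {k v : ℕ} (hk : 1 ≤ k) (hkq : k < q) (hv : k + 2 ^ v ≤ p) :
    InTasks p q (btList p q) (serialTask k v) := by
  have : 1 ≤ 2 ^ v := Nat.one_le_two_pow
  refine ⟨mem_btList_iff.mpr ?_, by omega, by omega⟩
  dsimp only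
  refine ⟨hk, by omega, by omega, hv, ?_⟩
  simp

lemma inTasks_descentTask {k m v : ℕ} (hk : 1 ≤ k) (hkq : k < q) (hvm : v < m)
    (hm : k + 2 ^ m ≤ p + 1) : InTasks p q (btList p q) (descentTask k m v) := by
  have h1 : 1 ≤ 2 ^ v := Nat.one_le_two_pow
  have h2 : 2 ^ (v + 1) ≤ 2 ^ m := Nat.pow_le_pow_right two_pos hvm
  have h3 : 2 ^ (v + 1) = 2 * 2 ^ v := pow_succ' 2 v
  refine ⟨mem_btList_iff.mpr ?_, by omega, by omega⟩
  dsimp only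
  refine ⟨hk, by omega, by omega, by omega, ?_⟩
  rw [show k + 2 ^ m - 2 ^ v - k = 2 ^ m - 2 ^ v by omega, padicValNat_two_pow_sub_two_pow hvm]
  omega

lemma HasPathTo.serial {k v v' w : ℕ} (h : HasPathTo p q (btList p q) (serialTask k v) w)
    (hk : 1 ≤ k) (hkq : k < q) (hvv' : v ≤ v') (hv' : k + 2 ^ v' ≤ p) :
    HasPathTo p q (btList p q) (serialTask k v') (w + 6 * (v' - v)) := by
  induction v', hvv' using Nat.le_induction with
  | base => simpa using h
  | succ v' _ ih =>
    have hpow : 2 ^ v' ≤ 2 ^ (v' + 1) := Nat.pow_le_pow_right two_pos (by omega)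
    have hmem := inTasks_serialTask hk hkq (show k + 2 ^ v' ≤ p by omega)
    have hmem' := inTasks_serialTask hk hkq hv'
    have hbefore : Before (btList p q) ⟨k + 2 ^ v', k, k⟩ ⟨k + 2 ^ (v' + 1), k, k⟩ :=
      (before_iff_of_pairwise (btList_pairwise_btKey p q) hmem.1 hmem'.1).mpr
        (by simp [btKey, Prod.Lex.toLex_lt_toLex])
    refine ((ih (by omega)).step hmem' (Prec.ttmqr_serial _ _ _ _ _ hbefore)).mono ?_
    simp only [serialTask, weight]
    omega

lemma HasPathTo.descent {k m v v' w : ℕ} (h : HasPathTo p q (btList p q) (descentTask k m v) w)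
    (hk : 1 ≤ k) (hkq : k < q) (hvv' : v ≤ v') (hv'm : v' < m) (hm : k + 2 ^ m ≤ p + 1) :
    HasPathTo p q (btList p q) (descentTask k m v') (w + 6 * (v' - v)) := by
  induction v', hvv' using Nat.le_induction with
  | base => simpa using h
  | succ v' _ ih =>
    refine ((ih (by omega)).step (inTasks_descentTask hk hkq hv'm hm)
      (Prec.ttmqr_pivot_use _ _ _ _ _)).mono ?_
    simp only [descentTask, weight]
    omega

lemma HasPathTo.column {k w : ℕ}
    (h : HasPathTo p q (btList p q) (descentTask k (Nat.log 2 (p - k + 1)) 0) w)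
    (hk : 1 ≤ k) (hkq : k < q) (hkp : k < p) :
    HasPathTo p q (btList p q) (serialTask k (Nat.log 2 (p - k))) (w + 6 * Nat.log 2 (p - k)) := by
  have hm : 2 ^ Nat.log 2 (p - k + 1) ≤ p - k + 1 := Nat.pow_log_le_self 2 (by omega)
  obtain ⟨m, hm'⟩ : ∃ m, Nat.log 2 (p - k + 1) = m + 1 :=
    ⟨Nat.log 2 (p - k + 1) - 1, by
      have := Nat.le_log_of_pow_le (b := 2) one_lt_two (show 2 ^ 1 ≤ p - k + 1 by omega)
      omega⟩
  rw [hm', pow_succ] at hm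
  rw [hm'] at h
  have hmM : m ≤ Nat.log 2 (p - k) := Nat.le_log_of_pow_le one_lt_two (by omega)
  have hM : 2 ^ Nat.log 2 (p - k) ≤ p - k := Nat.pow_log_le_self 2 (by omega)
  have hdesc := h.descent hk hkq (Nat.zero_le m) (by omega) (by rw [pow_succ]; omega)
  rw [descentTask_self] at hdesc
  exact (hdesc.serial hk hkq hmM (by omega)).mono (by omega)

lemma HasPathTo.cross {k w : ℕ}
    (h : HasPathTo p q (btList p q) (serialTask k (Nat.log 2 (p - k))) w)
    (hk : 1 ≤ k) (hkm : k + 1 < min p q) :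
    HasPathTo p q (btList p q) (descentTask (k + 1) (Nat.log 2 (p - (k + 1) + 1)) 0)
      (w + 16) := by
  rw [show p - (k + 1) + 1 = p - k by omega]
  set M := Nat.log 2 (p - k)
  have hM : 2 ^ M ≤ p - k := Nat.pow_log_le_self 2 (by omega)
  have hM1 : 1 ≤ M := Nat.le_log_of_pow_le one_lt_two (by omega)
  have h2M : 2 ≤ 2 ^ M := Nat.le_self_pow (by omega) 2
  have hgeqrt : HasPathTo p q (btList p q) (.GEQRT (k + 2 ^ M) (k + 1)) (w + 4) :=
    h.step ⟨by omega, by omega, by omega, by omega⟩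
      (Prec.ttmqr_geqrt _ _ _ (k + 1) (by omega) (Or.inl rfl))
  have hunmqr : HasPathTo p q (btList p q) (.UNMQR (k + 2 ^ M) (k + 1) (k + 2)) (w + 10) :=
    hgeqrt.step ⟨by omega, by omega, by omega, by omega, by omega, by omega⟩
      (Prec.geqrt_unmqr _ _ _)
  have hdesc : descentTask (k + 1) M 0 = .TTMQR (k + 2 ^ M) (k + 2 ^ M - 1) (k + 1) (k + 2) := by
    simp only [descentTask, Task.TTMQR.injEq, pow_zero, zero_add, pow_one, and_true]
    omega
  exact hunmqr.step (inTasks_descentTask (by omega) (by omega) hM1 (by omega))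
    (hdesc ▸ Prec.unmqr_ttmqr_row _ _ _ _)

lemma hasPathTo_btList {k : ℕ} (hk : 1 ≤ k) (hkm : k < min p q) :
    HasPathTo p q (btList p q) (serialTask k (Nat.log 2 (p - k)))
      (6 * k * (Nat.log 2 (p - k) + 1)) := by
  induction k, hk using Nat.le_induction with
  | base =>
    have hm : 2 ^ Nat.log 2 (p - 1 + 1) ≤ p - 1 + 1 := Nat.pow_log_le_self 2 (by omega)
    have hm1 : 1 ≤ Nat.log 2 (p - 1 + 1) := Nat.le_log_of_pow_le one_lt_two (by omega)
    refine ((hasPathTo_weight (inTasks_descentTask le_rfl (by omega) hm1 (by omega))).column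
      le_rfl (by omega) (by omega)).mono ?_
    simp only [descentTask, weight]
    omega
  | succ k hk ih =>
    have hlog : Nat.log 2 (p - (k + 1)) ≤ Nat.log 2 (p - k) := Nat.log_mono_right (by omega)
    refine (((ih (by omega)).cross hk hkm).column (by omega) (by omega) (by omega)).mono ?_
    nlinarith

lemma le_cpLength_btList {k : ℕ} (hkm : k < min p q) :
    6 * k * (Nat.log 2 (p - k) + 1) ≤ cpLength p q (btList p q) := by
  rcases Nat.eq_zero_or_pos k with rfl | hk
  · simp
  · exact (hasPathTo_btList hk hkm).le_cpLength isSchedule_btFinish fun _ => btFinish_le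

end LowerBound

section Asymptotics

open Real

variable {p q : ℕ}

lemma logb_natCast_lt_log_add_one (n : ℕ) : logb 2 n < Nat.log 2 n + 1 := by
  have := Nat.lt_floor_add_one (logb 2 (n : ℝ))
  rwa [show (2 : ℝ) = (2 : ℕ) by norm_num, natFloor_logb_natCast] at this

lemma logb_natCast_le_self (n : ℕ) : logb 2 n ≤ n := by
  have : (n : ℝ) ≤ 2 ^ n := by exact_mod_cast Nat.lt_two_pow_self.le
  rcases n.eq_zero_or_pos with rfl | hn
  · simp
  calc logb 2 n ≤ logb 2 (2 ^ n) := logb_le_logb_of_le one_lt_two (by positivity) this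
    _ = n := by rw [logb_pow, logb_self_eq_one one_lt_two, mul_one]

lemma one_le_logb_natCast (hp : 2 ≤ p) : 1 ≤ logb 2 (p : ℝ) := by
  rw [← logb_self_eq_one one_lt_two]
  exact logb_le_logb_of_le one_lt_two two_pos (by exact_mod_cast hp)

lemma cpLength_btList_le_mul_logb (p q : ℕ) :
    (cpLength p q (btList p q) : ℝ) ≤ q * (16 + 6 * logb 2 p) := by
  have hlog : (Nat.log 2 p : ℝ) ≤ logb 2 p := by exact_mod_cast natLog_le_logb p 2
  calc (cpLength p q (btList p q) : ℝ) ≤ (min p q * (16 + 6 * Nat.log 2 p) : ℕ) := by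
        exact_mod_cast cpLength_btList_le p q
    _ ≤ q * (16 + 6 * logb 2 p) := by push_cast; gcongr; exact_mod_cast min_le_right p q

/-- All but a fraction `ε` of the first `q` columns have at least `ε p` rows left. -/
lemma mul_logb_le_cpLength_btList {ε : ℝ} (hε0 : 0 < ε) (hε1 : ε ≤ 1) (hq : 1 ≤ q)
    (hqp : q ≤ p) (hεp : 1 ≤ ε * p) :
    6 * ((1 - ε) * q - 1) * logb 2 (ε * p) ≤ cpLength p q (btList p q) := by
  set c := ⌈ε * q⌉₊
  have hc1 : 1 ≤ c := Nat.one_le_iff_ne_zero.mpr (Nat.ceil_pos.mpr (by positivity)).ne'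
  have hcq : c ≤ q := Nat.ceil_le.mpr (by nlinarith [(Nat.one_le_cast (α := ℝ)).mpr hq])
  have hc : (c : ℝ) < ε * q + 1 := Nat.ceil_lt_add_one (by positivity)
  have hc' : ε * q ≤ c := Nat.le_ceil _
  have hu : ((q - c : ℕ) : ℝ) = q - c := by push_cast [Nat.cast_sub hcq]; ring
  have hpu : ε * p ≤ ((p - (q - c) : ℕ) : ℝ) := by
    have : (q : ℝ) ≤ p := by exact_mod_cast hqp
    rw [Nat.cast_sub (by omega), hu]
    nlinarith
  have hlog0 : 0 ≤ logb 2 (ε * p) := logb_nonneg one_lt_two hεp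
  have hlog : logb 2 (ε * p) ≤ Nat.log 2 (p - (q - c)) + 1 :=
    (logb_le_logb_of_le one_lt_two (by positivity) hpu).trans
      (logb_natCast_lt_log_add_one _).le
  calc 6 * ((1 - ε) * q - 1) * logb 2 (ε * p)
      ≤ 6 * ((q - c : ℕ) : ℝ) * logb 2 (ε * p) := by gcongr; rw [hu]; linarith
    _ ≤ 6 * ((q - c : ℕ) : ℝ) * (Nat.log 2 (p - (q - c)) + 1) := by gcongr
    _ ≤ cpLength p q (btList p q) := by
        exact_mod_cast le_cpLength_btList (show q - c < min p q by omega)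

lemma cpLength_btList_div_le (hp : 2 ≤ p) (hq : 1 ≤ q) :
    (cpLength p q (btList p q) : ℝ) / (6 * q * logb 2 p) ≤ 1 + 3 * (logb 2 p)⁻¹ := by
  have hL := one_le_logb_natCast hp
  rw [div_le_iff₀ (by positivity)]
  calc (cpLength p q (btList p q) : ℝ) ≤ q * (16 + 6 * logb 2 p) :=
        cpLength_btList_le_mul_logb p q
    _ ≤ (1 + 3 * (logb 2 p)⁻¹) * (6 * q * logb 2 p) := by
        field_simp
        nlinarith

lemma le_cpLength_btList_div (hp : 2 ≤ p) (hq : 1 ≤ q) (hqp : q ≤ p) :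
    (1 - (logb 2 p)⁻¹ - (q : ℝ)⁻¹) * (1 - logb 2 (logb 2 p) / logb 2 p) ≤
      (cpLength p q (btList p q) : ℝ) / (6 * q * logb 2 p) := by
  have hL := one_le_logb_natCast hp
  have hLp : 1 ≤ (logb 2 p)⁻¹ * p := by
    rw [inv_mul_eq_div, one_le_div (by positivity)]
    exact logb_natCast_le_self p
  have key := mul_logb_le_cpLength_btList (inv_pos.mpr (by positivity)) (inv_le_one_of_one_le₀ hL)
    hq hqp hLp
  rw [logb_mul (by positivity) (by positivity), logb_inv] at key
  rw [le_div_iff₀ (by positivity)]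
  refine (le_of_eq ?_).trans key
  field_simp
  ring

end Asymptotics

open Filter Topology

/-- **Proposition 1.** The critical path length of the tiled BinaryTree algorithm
(with TT kernels) is `6 q log₂ p + o(q log₂ p)`: for every sequence `(pₙ, qₙ)` with
`qₙ ≤ pₙ`, `qₙ → ∞` and `pₙ → ∞`, the ratio `CP_BT(pₙ, qₙ) / (6 qₙ log₂ pₙ)` tends
to `1`. -/
theorem binaryTree_cpLength_asymptotic (p q : ℕ → ℕ) (hqp : ∀ n, q n ≤ p n)
    (hq : Filter.Tendsto q Filter.atTop Filter.atTop)
    (hp : Filter.Tendsto p Filter.atTop Filter.atTop) :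
    Filter.Tendsto
      (fun n => (cpLength (p n) (q n) (btList (p n) (q n)) : ℝ) /
        (6 * (q n : ℝ) * Real.logb 2 (p n)))
      Filter.atTop (nhds 1) := by
  have hL : Tendsto (fun n => Real.logb 2 (p n)) atTop atTop :=
    (Real.tendsto_logb_atTop one_lt_two).comp (tendsto_natCast_atTop_atTop.comp hp)
  have hqR : Tendsto (fun n => (q n : ℝ)) atTop atTop := tendsto_natCast_atTop_atTop.comp hq
  have hloglog : Tendsto (fun n => Real.logb 2 (Real.logb 2 (p n)) / Real.logb 2 (p n))
      atTop (𝓝 0) := by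
    have h := Real.tendsto_pow_logb_div_mul_add_atTop (b := 2) 1 0 1 one_ne_zero
    simp only [pow_one, one_mul, add_zero] at h
    exact h.comp hL
  have hpq := (hp.eventually_ge_atTop 2).and (hq.eventually_ge_atTop 1)
  refine tendsto_of_tendsto_of_tendsto_of_le_of_le' ?_ ?_
    (hpq.mono fun n ⟨hpn, hqn⟩ => le_cpLength_btList_div hpn hqn (hqp n))
    (hpq.mono fun n ⟨hpn, hqn⟩ => cpLength_btList_div_le hpn hqn)
  · simpa using (((tendsto_const_nhds (x := (1 : ℝ))).sub hL.inv_tendsto_atTop).sub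
      hqR.inv_tendsto_atTop).mul ((tendsto_const_nhds (x := (1 : ℝ))).sub hloglog)
  · simpa using tendsto_const_nhds.add (hL.inv_tendsto_atTop.const_mul 3)

end TiledQR
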